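/- Let V be a vertex operator algebra of CFT-type and let X be a set of homogeneous representatives of a spanning set of V/C_1(V). Then V is spanned by elements of the form u^{(1)}_{n_1} ⋯ u^{(r)}_{n_r} 1 with r ∈ ℕ, u^{(i)} ∈ X, n_i ∈ ℤ, and wt(u^{(1)}_{n_1}) ≥ ⋯ ≥ wt(u^{(r)}_{n_r}) > 0. -/

import Mathlib

open scoped BigOperators

namespace VOAPaper

/-- Integer binomial coefficient `C(m, i)` for `m : ℤ`, `i : ℕ`. -/
def zchoose (m : ℤ) (i : ℕ) : ℤ :=
  if 0 ≤ m then ((m.toNat).choose i : ℤ)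
  else (-1) ^ i * ((((i : ℤ) - m - 1).toNat).choose i : ℤ)

variable (V : Type) [AddCommGroup V] [Module ℂ V]

/-- A vertex algebra structure on `V`: modes `u_n`, vacuum, truncation,
vacuum/creation axioms, and the Borcherds (Jacobi) identity. -/
structure VertexAlg where
  mode : V →ₗ[ℂ] ℤ → Module.End ℂ V
  vac : V
  trunc : ∀ u w : V, ∃ N : ℤ, ∀ n : ℤ, N ≤ n → mode u n w = 0
  vac_mode : ∀ (n : ℤ) (w : V), mode vac n w = if n = -1 then w else 0
  creation_neg_one : ∀ u : V, mode u (-1) vac = u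
  creation_nonneg : ∀ (u : V) (n : ℤ), 0 ≤ n → mode u n vac = 0
  borcherds : ∀ (u v w : V) (p q m : ℤ),
    (∑ᶠ i : ℕ, zchoose m i • mode (mode u (p + i) v) (m + q - i) w) =
    (∑ᶠ i : ℕ, ((-1 : ℤ) ^ i * zchoose p i) •
      (mode u (p + m - i) (mode v (q + i) w)
        - (p.negOnePow : ℤ) • mode v (p + q - i) (mode u (m + i) w)))

/-- A vertex operator algebra of CFT-type: a vertex algebra with conformal
vector `ω`, central charge `c`, an `L(0)`-grading `V = ⊕_{n ≥ 0} V_n` with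
`V_0 = ℂ 1`, Virasoro relations, and the `L(-1)`-derivation property. -/
structure VOA extends VertexAlg V where
  ω : V
  c : ℂ
  grading : ℤ → Submodule ℂ V
  internal : DirectSum.IsInternal grading
  neg_bot : ∀ n : ℤ, n < 0 → grading n = ⊥
  L0_eigen : ∀ (n : ℤ) (v : V), v ∈ grading n → mode ω 1 v = (n : ℂ) • v
  vac_grade : vac ∈ grading 0
  cft : grading 0 = Submodule.span ℂ {vac}
  ω_grade : ω ∈ grading 2
  virasoro : ∀ m n : ℤ,
    mode ω (m + 1) * mode ω (n + 1) - mode ω (n + 1) * mode ω (m + 1)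
      = (m - n) • mode ω (m + n + 1)
        + (if m + n = 0 then ((m ^ 3 - m : ℂ) / 12) * c else 0) • (1 : Module.End ℂ V)
  Lneg1_deriv : ∀ (u : V) (n : ℤ), mode (mode ω 0 u) n = (-n) • mode u (n - 1)

/-- A weak module for (the underlying vertex algebra of) `V`. -/
structure WeakMod (A : VertexAlg V) (M : Type) [AddCommGroup M] [Module ℂ M] where
  mmode : V →ₗ[ℂ] ℤ → Module.End ℂ M
  trunc : ∀ (v : V) (w : M), ∃ N : ℤ, ∀ n : ℤ, N ≤ n → mmode v n w = 0
  vac_mode : ∀ (n : ℤ) (w : M), mmode A.vac n w = if n = -1 then w else 0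
  borcherds : ∀ (u v : V) (w : M) (p q m : ℤ),
    (∑ᶠ i : ℕ, zchoose m i • mmode (A.mode u (p + i) v) (m + q - i) w) =
    (∑ᶠ i : ℕ, ((-1 : ℤ) ^ i * zchoose p i) •
      (mmode u (p + m - i) (mmode v (q + i) w)
        - (p.negOnePow : ℤ) • mmode v (p + q - i) (mmode u (m + i) w)))

/-- An ℕ-gradable weak module: a weak module with a compatible
lower-truncated grading `M = ⊕_{n ≥ 0} M(n)`. -/
structure NGradedMod (W : VOA V) (M : Type) [AddCommGroup M] [Module ℂ M]
    extends WeakMod V W.toVertexAlg M where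
  mgrading : ℤ → Submodule ℂ M
  internal : DirectSum.IsInternal mgrading
  neg_bot : ∀ n : ℤ, n < 0 → mgrading n = ⊥
  compat : ∀ (r : ℤ) (v : V), v ∈ W.grading r → ∀ (m n : ℤ), ∀ w ∈ mgrading n,
    mmode v m w ∈ mgrading (n + r - m - 1)

/-- Iterated application of modes: `applyModes [(u¹,n₁),…,(uʳ,nᵣ)] w = u¹_{n₁} ⋯ uʳ_{nᵣ} w`. -/
def applyModes (A : VertexAlg V) : List (V × ℤ) → V → V
  | [], w => w
  | p :: L, w => A.mode p.1 p.2 (applyModes A L w)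

/-- Iterated application of module modes. -/
def applyModesM {M : Type} [AddCommGroup M] [Module ℂ M] {A : VertexAlg V}
    (Mod : WeakMod V A M) : List (V × ℤ) → M → M
  | [], w => w
  | p :: L, w => Mod.mmode p.1 p.2 (applyModesM Mod L w)

/-- The subspace `C_n(V) = span{ u_{-n} v }`. -/
def Cspace (A : VertexAlg V) (n : ℕ) : Submodule ℂ V :=
  Submodule.span ℂ { x | ∃ u v : V, x = A.mode u (-(n : ℤ)) v }

/-- The subspace `C_1(V) = span{ u_{-1} v, L(-1)u : u, v ∈ V_+ }`. -/
def C1space (W : VOA V) : Submodule ℂ V :=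
  Submodule.span ℂ
    ({ x | ∃ u v : V, (∃ r : ℤ, 0 < r ∧ u ∈ W.grading r) ∧
        (∃ r : ℤ, 0 < r ∧ v ∈ W.grading r) ∧ x = W.mode u (-1) v }
      ∪ { x | ∃ u : V, (∃ r : ℤ, 0 < r ∧ u ∈ W.grading r) ∧ x = W.mode W.ω 0 u })

/-- A submodule invariant under all modes. -/
def Invariant {M : Type} [AddCommGroup M] [Module ℂ M] {A : VertexAlg V}
    (Mod : WeakMod V A M) (N : Submodule ℂ M) : Prop :=
  ∀ (v : V) (n : ℤ), ∀ w ∈ N, Mod.mmode v n w ∈ N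

/-- Irreducibility of a weak module. -/
def IsIrreducibleMod {M : Type} [AddCommGroup M] [Module ℂ M] {A : VertexAlg V}
    (Mod : WeakMod V A M) : Prop :=
  (⊤ : Submodule ℂ M) ≠ ⊥ ∧
    ∀ N : Submodule ℂ M, Invariant V Mod N → N = ⊥ ∨ N = ⊤

/-!
Every `x ∈ V_j` equals `x_{-1} 1`, so it suffices to put every monomial `a¹_{m₁} ⋯ aʳ_{mᵣ} 1`
with homogeneous `aⁱ` into the span `U` of the ordered monomials. This goes by strong induction
on the cost `∑ᵢ max (2 wt aⁱ - 1) 1`. A factor of weight `≤ 0` is a multiple of the vacuum and can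
be dropped. A factor of positive weight `s` is a combination of weight-`s` elements of `X` and of
the generators `u_{-1} v`, `L(-1) u` of `C_1(V)`; the iterate formula for `(u_{-1} v)_m` and
`(L(-1) u)_m = -m u_{m-1}` turn the latter into monomials of smaller cost. Once all factors lie in
`X`, adjacent factors in the wrong order are swapped: by the commutator formula a swap only adds
monomials of smaller cost. A sorted monomial either lies in `U` or ends with a factor `u_m 1`,
`m ≥ 0`, which vanishes.
-/

theorem _root_.iSupIndep.inf_iSup_eq_of_le {ι α : Type*} [CompleteLattice α]
    [IsModularLattice α] {f g : ι → α} (hg : iSupIndep g) (hfg : f ≤ g) (i : ι) :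
    g i ⊓ ⨆ j, f j = f i := by
  rw [iSup_split_single f i, inf_comm, sup_inf_assoc_of_le _ (hfg i)]
  refine le_antisymm (sup_le le_rfl ?_) le_sup_left
  calc (⨆ j, ⨆ (_ : j ≠ i), f j) ⊓ g i ≤ (⨆ j, ⨆ (_ : j ≠ i), g j) ⊓ g i :=
        inf_le_inf_right _ (iSup₂_mono fun j _ => hfg j)
    _ = ⊥ := (hg i).symm.eq_bot
    _ ≤ f i := bot_le

theorem _root_.iSupIndep.mem_span_inter {ι R M : Type*} [Ring R] [AddCommGroup M] [Module R M]
    {ℳ : ι → Submodule R M} (hℳ : iSupIndep ℳ) {Y : Set M} (hY : Y ⊆ ⋃ i, (ℳ i : Set M))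
    {i : ι} {x : M} (hx : x ∈ ℳ i) (hxY : x ∈ Submodule.span R Y) :
    x ∈ Submodule.span R (Y ∩ ℳ i) := by
  have hsplit : Submodule.span R Y = ⨆ j, Submodule.span R (Y ∩ ℳ j) := by
    rw [← Submodule.span_iUnion, ← Set.inter_iUnion, Set.inter_eq_left.mpr hY]
  rw [← hℳ.inf_iSup_eq_of_le (fun j => Submodule.span_le.mpr Set.inter_subset_right) i,
    ← hsplit]
  exact ⟨hx, hxY⟩

theorem _root_.Submodule.apply_finsum_mem {ι R M N : Type*} [Semiring R] [AddCommMonoid M]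
    [AddCommMonoid N] [Module R M] [Module R N] (f : M →ₗ[R] N) (S : Submodule R N)
    {g : ι → M} (h : ∀ i, f (g i) ∈ S) : f (∑ᶠ i, g i) ∈ S :=
  finsum_induction (fun x => f x ∈ S) (by simp) (fun x y hx hy => by simpa using add_mem hx hy) h

def inversions {α β : Type*} [LinearOrder β] (f : α → β) : List α → ℕ
  | [] => 0
  | a :: l => l.countP (fun b => f a < f b) + inversions f l

theorem inversions_append_swap_lt {α β : Type*} [LinearOrder β] (f : α → β) (F G : List α)
    {a b : α} (h : f a < f b) :
    inversions f (F ++ b :: a :: G) < inversions f (F ++ a :: b :: G) := by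
  induction F with
  | nil =>
    simp [inversions, h, h.not_gt]
    omega
  | cons c F ih =>
    simp only [List.cons_append, inversions, List.countP_append, List.countP_cons]
    omega

/-- The factor `vec_idx` of a monomial, together with a weight `deg` of `vec`. The weight is
recorded because `0` has every weight. -/
structure ModeFactor (α : Type*) where
  vec : α
  deg : ℤ
  idx : ℤ

namespace ModeFactor

variable {α : Type*}

def toPair (p : ModeFactor α) : α × ℤ := (p.vec, p.idx)

def modeWt (wt : α → ℤ) (p : ModeFactor α) : ℤ := wt p.vec - p.idx - 1

end ModeFactor

/-- Splitting a factor of weight `r + r'` (`r, r' > 0`) into two, or merging two factors of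
weights `s, t` into one of weight `< s + t`, lowers the cost. -/
def degCost (d : ℤ) : ℕ := (max (2 * d - 1) 1).toNat

theorem one_le_degCost (d : ℤ) : 1 ≤ degCost d := by
  unfold degCost; omega

theorem degCost_add_lt {r r' : ℤ} (hr : 0 < r) (hr' : 0 < r') :
    degCost r + degCost r' < degCost (r + r') := by
  unfold degCost; omega

theorem degCost_lt_add {g s t : ℤ} (h : g < s + t) : degCost g < degCost s + degCost t := by
  unfold degCost; omega

theorem degCost_lt_add_one {r : ℤ} (hr : 0 < r) : degCost r < degCost (r + 1) := by
  unfold degCost; omega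

def cost {α : Type*} (L : List (ModeFactor α)) : ℕ := (L.map fun p => degCost p.deg).sum

@[simp]
theorem cost_nil {α : Type*} : cost ([] : List (ModeFactor α)) = 0 := rfl

@[simp]
theorem cost_cons {α : Type*} (p : ModeFactor α) (L : List (ModeFactor α)) :
    cost (p :: L) = degCost p.deg + cost L := rfl

@[simp]
theorem cost_append {α : Type*} (F G : List (ModeFactor α)) :
    cost (F ++ G) = cost F + cost G := by
  simp [cost]

section KarelLi

variable {V}

theorem zchoose_natCast (m i : ℕ) : zchoose m i = m.choose i := by
  simp [zchoose]

theorem zchoose_zero_right (m : ℤ) : zchoose m 0 = 1 := by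
  unfold zchoose; split_ifs <;> simp

theorem zchoose_zero_left {i : ℕ} (hi : i ≠ 0) : zchoose 0 i = 0 := by
  simpa [Nat.choose_eq_zero_of_lt (Nat.pos_of_ne_zero hi)] using zchoose_natCast 0 i

theorem zchoose_neg_one (i : ℕ) : zchoose (-1) i = (-1) ^ i := by
  simp [zchoose]

namespace VertexAlg

variable (A : VertexAlg V)

theorem mode_mode_comm (u v w : V) (m n : ℤ) :
    A.mode u m (A.mode v n w) = A.mode v n (A.mode u m w) +
      ∑ᶠ i : ℕ, zchoose m i • A.mode (A.mode u i v) (m + n - i) w := by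
  have h := A.borcherds u v w 0 n m
  conv at h => rhs; rw [finsum_eq_single _ 0 fun i hi => by simp [zchoose_zero_left hi]]
  rw [← sub_eq_iff_eq_add']
  simpa [zchoose_zero_right] using h.symm

theorem mode_neg_one_mode (u v w : V) (n : ℤ) :
    A.mode (A.mode u (-1) v) n w = ∑ᶠ i : ℕ,
      (A.mode u (-1 - i) (A.mode v (n + i) w) + A.mode v (n - 1 - i) (A.mode u i w)) := by
  have h := A.borcherds u v w (-1) n 0
  conv at h => lhs; rw [finsum_eq_single _ 0 fun i hi => by simp [zchoose_zero_left hi]]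
  simpa [zchoose_zero_right, zchoose_neg_one, ← mul_pow, neg_add_eq_sub, sub_right_comm] using h

def modeProd (L : List (ModeFactor V)) : Module.End ℂ V :=
  (L.map fun p => A.mode p.vec p.idx).prod

def monomial (L : List (ModeFactor V)) : V :=
  applyModes V A (L.map ModeFactor.toPair) A.vac

@[simp]
theorem monomial_nil : A.monomial [] = A.vac := rfl

@[simp]
theorem monomial_cons (p : ModeFactor V) (L : List (ModeFactor V)) :
    A.monomial (p :: L) = A.mode p.vec p.idx (A.monomial L) := rfl

@[simp]
theorem monomial_append (F G : List (ModeFactor V)) :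
    A.monomial (F ++ G) = A.modeProd F (A.monomial G) := by
  induction F with
  | nil => rfl
  | cons p F ih => simp [ih, modeProd]

theorem monomial_append_cons (F G : List (ModeFactor V)) (p : ModeFactor V) :
    A.monomial (F ++ p :: G) = A.modeProd F (A.mode p.vec p.idx (A.monomial G)) := by
  rw [monomial_append, monomial_cons]

end VertexAlg

namespace VOA

variable (W : VOA V)

theorem grading_eq_eigenspace (n : ℤ) :
    W.grading n = Module.End.eigenspace (W.mode W.ω 1) n := by
  have hle : W.grading ≤ fun n : ℤ => Module.End.eigenspace (W.mode W.ω 1) n :=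
    fun n v hv => Module.End.mem_eigenspace_iff.mpr (W.L0_eigen n v hv)
  have hind : iSupIndep fun n : ℤ => Module.End.eigenspace (W.mode W.ω 1) n :=
    (Module.End.eigenspaces_iSupIndep _).comp Int.cast_injective
  exact congrFun ((hind.le_iff_eq_of_iSup_eq_top W.internal.submodule_iSup_eq_top).mp hle) n

theorem mode_mem_grading {a w : V} {s t : ℤ} (ha : a ∈ W.grading s) (hw : w ∈ W.grading t)
    (c : ℤ) : W.mode a c w ∈ W.grading (s + t - c - 1) := by
  have hsum : ∑ᶠ i : ℕ, zchoose 1 i • W.mode (W.mode W.ω i a) (1 + c - i) w =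
      W.mode (W.mode W.ω 0 a) (1 + c) w + W.mode (W.mode W.ω 1 a) c w := by
    have h1 (i : ℕ) : zchoose 1 i = Nat.choose 1 i := zchoose_natCast 1 i
    rw [finsum_eq_sum_of_support_subset _ (s := Finset.range 2) fun i hi => ?_]
    · simp [h1, Finset.sum_range_succ]
    · by_contra hi2
      simp [h1, Nat.choose_eq_zero_of_lt (show 1 < i by simpa using hi2)] at hi
  rw [grading_eq_eigenspace, Module.End.mem_eigenspace_iff, W.mode_mode_comm, hsum,
    W.Lneg1_deriv, W.L0_eigen s a ha, W.L0_eigen t w hw]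
  simp only [add_sub_cancel_left, map_smul, Pi.smul_apply, LinearMap.smul_apply]
  rw [← Int.cast_smul_eq_zsmul ℂ]
  push_cast
  module

theorem eq_of_mem_grading {x : V} (hx : x ≠ 0) {j k : ℤ} (hj : x ∈ W.grading j)
    (hk : x ∈ W.grading k) : j = k := by
  by_contra hjk
  exact hx (Submodule.disjoint_def.mp
    (W.internal.submodule_iSupIndep.pairwiseDisjoint hjk) x hj hk)

theorem mode_mem_span_singleton_of_nonpos {y : V} {s : ℤ} (hy : y ∈ W.grading s) (hs : s ≤ 0)
    (c : ℤ) (w : V) : W.mode y c w ∈ Submodule.span ℂ {w} := by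
  rcases hs.lt_or_eq with hs | rfl
  · rw [W.neg_bot s hs, Submodule.mem_bot] at hy
    simp [hy]
  · rw [W.cft, Submodule.mem_span_singleton] at hy
    obtain ⟨α, rfl⟩ := hy
    rw [map_smul, Pi.smul_apply, LinearMap.smul_apply, W.vac_mode]
    split_ifs <;> simp [Submodule.smul_mem, Submodule.mem_span_singleton_self]

def C1generators : Set V :=
  { x | ∃ u v : V, (∃ r : ℤ, 0 < r ∧ u ∈ W.grading r) ∧
      (∃ r : ℤ, 0 < r ∧ v ∈ W.grading r) ∧ x = W.mode u (-1) v }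
    ∪ { x | ∃ u : V, (∃ r : ℤ, 0 < r ∧ u ∈ W.grading r) ∧ x = W.mode W.ω 0 u }

theorem C1generators_subset_iUnion_grading :
    W.C1generators ⊆ ⋃ n, (W.grading n : Set V) := by
  rintro y (⟨u, v, ⟨r, -, hu⟩, ⟨r', -, hv⟩, rfl⟩ | ⟨u, ⟨r, -, hu⟩, rfl⟩)
  · exact Set.mem_iUnion.mpr ⟨_, W.mode_mem_grading hu hv (-1)⟩
  · exact Set.mem_iUnion.mpr ⟨_, W.mode_mem_grading W.ω_grade hu 0⟩

theorem span_union_C1generators_eq_top {X : Set V}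
    (hspan : Submodule.span ℂ ((C1space V W).mkQ '' X) = ⊤) :
    Submodule.span ℂ (X ∪ W.C1generators) = ⊤ := by
  rwa [Submodule.span_union, sup_comm, ← Submodule.map_mkQ_eq_top, Submodule.map_span]

def Graded (L : List (ModeFactor V)) : Prop := ∀ p ∈ L, p.vec ∈ W.grading p.deg

@[simp]
theorem graded_nil : W.Graded [] := by simp [Graded]

@[simp]
theorem graded_cons (p : ModeFactor V) (L : List (ModeFactor V)) :
    W.Graded (p :: L) ↔ p.vec ∈ W.grading p.deg ∧ W.Graded L := by
  simp [Graded]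

@[simp]
theorem graded_append (F G : List (ModeFactor V)) :
    W.Graded (F ++ G) ↔ W.Graded F ∧ W.Graded G := by
  simp [Graded, or_imp, forall_and]

def orderedMonomials (X : Set V) (wt : V → ℤ) : Set V :=
  { x | ∃ L : List (V × ℤ),
      (∀ p ∈ L, p.1 ∈ X) ∧
      L.IsChain (fun p q => wt q.1 - q.2 - 1 ≤ wt p.1 - p.2 - 1) ∧
      (∀ p ∈ L, 0 < wt p.1 - p.2 - 1) ∧
      x = applyModes V W.toVertexAlg L W.vac }

variable {X : Set V} {wt : V → ℤ} {n : ℕ}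

theorem mode_vac_eq_zero_of_modeWt_nonpos (hhom : ∀ u ∈ X, u ∈ W.grading (wt u))
    {p : ModeFactor V} (hX : p.vec ∈ X) (hdeg : 0 < p.deg) (hp : p.vec ∈ W.grading p.deg)
    (hwt : p.modeWt wt ≤ 0) : W.mode p.vec p.idx W.vac = 0 := by
  rcases eq_or_ne p.vec 0 with h0 | h0
  · simp [h0]
  have := W.eq_of_mem_grading h0 (hhom _ hX) hp
  exact W.creation_nonneg _ _ (by unfold ModeFactor.modeWt at hwt; omega)

theorem monomial_mem_of_isChain (hhom : ∀ u ∈ X, u ∈ W.grading (wt u))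
    {L : List (ModeFactor V)} (hX : ∀ p ∈ L, p.vec ∈ X) (hdeg : ∀ p ∈ L, 0 < p.deg)
    (hL : W.Graded L) (hchain : L.IsChain fun p q => q.modeWt wt ≤ p.modeWt wt) :
    W.monomial L ∈ Submodule.span ℂ (W.orderedMonomials X wt) := by
  by_cases hpos : ∀ p ∈ L, 0 < p.modeWt wt
  · refine Submodule.subset_span
      ⟨L.map ModeFactor.toPair, ?_, (List.isChain_map _).mpr hchain, ?_, rfl⟩
    · simpa [ModeFactor.toPair] using hX
    · simpa [ModeFactor.toPair, ModeFactor.modeWt] using hpos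
  simp only [not_forall, not_lt] at hpos
  obtain ⟨p, hp, hp0⟩ := hpos
  obtain ⟨F, q, rfl⟩ := (List.eq_nil_or_concat L).resolve_left (List.ne_nil_of_mem hp)
  rw [List.concat_eq_append] at *
  have hq : q.modeWt wt ≤ 0 := by
    have hpw : ((F ++ [q]).map (ModeFactor.modeWt wt)).Pairwise (· ≥ ·) :=
      ((List.isChain_map _).mpr hchain).pairwise
    rcases List.mem_append.mp hp with hpF | hpq
    · exact ((List.pairwise_append.mp (List.pairwise_map.mp hpw)).2.2 p hpF q (by simp)).trans hp0
    · exact List.mem_singleton.mp hpq ▸ hp0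
  rw [W.monomial_append, W.monomial_cons, W.monomial_nil,
    W.mode_vac_eq_zero_of_modeWt_nonpos hhom (hX q (by simp)) (hdeg q (by simp)) (hL q (by simp))
      hq, map_zero]
  exact zero_mem _

theorem monomial_mem_of_forall_vec_mem (hhom : ∀ u ∈ X, u ∈ W.grading (wt u))
    (ih : ∀ L, W.Graded L → cost L < n →
      W.monomial L ∈ Submodule.span ℂ (W.orderedMonomials X wt))
    {L : List (ModeFactor V)} (hX : ∀ p ∈ L, p.vec ∈ X) (hdeg : ∀ p ∈ L, 0 < p.deg)
    (hL : W.Graded L) (hcost : cost L ≤ n) :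
    W.monomial L ∈ Submodule.span ℂ (W.orderedMonomials X wt) := by
  induction hk : inversions (ModeFactor.modeWt wt) L using Nat.strong_induction_on
    generalizing L with
  | _ k ihk =>
  by_cases hsorted : L.IsChain fun p q => q.modeWt wt ≤ p.modeWt wt
  · exact W.monomial_mem_of_isChain hhom hX hdeg hL hsorted
  obtain ⟨p, q, F, G, rfl, hpq⟩ :
      ∃ p q F G, L = F ++ p :: q :: G ∧ p.modeWt wt < q.modeWt wt := by
    simpa [List.isChain_iff_forall_rel_of_append_cons_cons] using hsorted
  simp only [graded_append, graded_cons, cost_append, cost_cons] at hL hcost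
  rw [W.monomial_append_cons, W.monomial_cons, W.mode_mode_comm, map_add]
  refine add_mem ?_ (Submodule.apply_finsum_mem _ _ fun i => ?_)
  · rw [← W.monomial_cons, ← W.monomial_append_cons]
    refine ihk _ (hk ▸ inversions_append_swap_lt _ F G hpq)
      (by simpa [or_comm, or_left_comm] using hX) (by simpa [or_comm, or_left_comm] using hdeg)
      (by simp [hL]) (by simp only [cost_append, cost_cons]; omega) rfl
  · have hlt := degCost_lt_add (g := p.deg + q.deg - i - 1) (s := p.deg) (t := q.deg) (by omega)
    have hcorr := ih (F ++ ⟨W.mode p.vec i q.vec, p.deg + q.deg - i - 1, p.idx + q.idx - i⟩ :: G)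
      (by simp [hL, W.mode_mem_grading hL.2.1 hL.2.2.1])
      (by simp only [cost_append, cost_cons]; omega)
    rw [map_zsmul]
    exact zsmul_mem (by simpa using hcorr) _

theorem modeProd_mode_C1generator_mem
    (ih : ∀ L, W.Graded L → cost L < n →
      W.monomial L ∈ Submodule.span ℂ (W.orderedMonomials X wt))
    {F G : List (ModeFactor V)} (hF : W.Graded F) (hG : W.Graded G) {y : V}
    (hy : y ∈ W.C1generators) {s : ℤ} (hys : y ∈ W.grading s) (c : ℤ)
    (hcost : cost F + degCost s + cost G ≤ n) :
    W.modeProd F (W.mode y c (W.monomial G)) ∈ Submodule.span ℂ (W.orderedMonomials X wt) := by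
  rcases eq_or_ne y 0 with rfl | hy0
  · simp
  rcases hy with ⟨u, v, ⟨r, hr, hu⟩, ⟨r', hr', hv⟩, rfl⟩ | ⟨u, ⟨r, hr, hu⟩, rfl⟩
  · obtain rfl : s = r + r' :=
      W.eq_of_mem_grading hy0 hys (by simpa using W.mode_mem_grading hu hv (-1))
    have hsplit := degCost_add_lt hr hr'
    rw [W.mode_neg_one_mode]
    refine Submodule.apply_finsum_mem _ _ fun i => ?_
    rw [map_add]
    refine add_mem ?_ ?_
    · simpa using ih (F ++ ⟨u, r, -1 - i⟩ :: ⟨v, r', c + i⟩ :: G) (by simp [*])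
        (by simp only [cost_append, cost_cons]; omega)
    · simpa using ih (F ++ ⟨v, r', c - 1 - i⟩ :: ⟨u, r, i⟩ :: G) (by simp [*])
        (by simp only [cost_append, cost_cons]; omega)
  · obtain rfl : s = r + 1 := W.eq_of_mem_grading hy0 hys
      (by convert W.mode_mem_grading W.ω_grade hu 0 using 2; ring)
    have hlt := degCost_lt_add_one hr
    rw [W.Lneg1_deriv, LinearMap.smul_apply, map_zsmul]
    refine zsmul_mem ?_ _
    simpa using ih (F ++ ⟨u, r, c - 1⟩ :: G) (by simp [*])
      (by simp only [cost_append, cost_cons]; omega)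

theorem monomial_append_mem (hhom : ∀ u ∈ X, u ∈ W.grading (wt u))
    (hspan : Submodule.span ℂ ((C1space V W).mkQ '' X) = ⊤)
    (ih : ∀ L, W.Graded L → cost L < n →
      W.monomial L ∈ Submodule.span ℂ (W.orderedMonomials X wt))
    (G : List (ModeFactor V)) :
    ∀ F : List (ModeFactor V), (∀ p ∈ F, p.vec ∈ X ∧ 0 < p.deg) → W.Graded (F ++ G) →
      cost (F ++ G) ≤ n → W.monomial (F ++ G) ∈ Submodule.span ℂ (W.orderedMonomials X wt) := by
  induction G with
  | nil =>
    intro F hF hL hcost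
    simp only [List.append_nil] at hL hcost ⊢
    exact W.monomial_mem_of_forall_vec_mem hhom ih (fun p hp => (hF p hp).1)
      (fun p hp => (hF p hp).2) hL hcost
  | cons p G ihG =>
    intro F hF hL hcost
    simp only [graded_append, graded_cons, cost_append, cost_cons] at hL hcost
    rw [W.monomial_append_cons]
    by_cases hs : p.deg ≤ 0
    · obtain ⟨α, hα⟩ := Submodule.mem_span_singleton.mp
        (W.mode_mem_span_singleton_of_nonpos hL.2.1 hs p.idx (W.monomial G))
      have hlt := one_le_degCost p.deg
      rw [← hα, map_smul, ← W.monomial_append]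
      exact Submodule.smul_mem _ _
        (ih _ (by simp [hL]) (by simp only [cost_append]; omega))
    let Φ : V →ₗ[ℂ] V := W.modeProd F ∘ₗ (LinearMap.proj p.idx ∘ₗ W.mode).flip (W.monomial G)
    have hp : p.vec ∈ Submodule.span ℂ ((X ∪ W.C1generators) ∩ W.grading p.deg) := by
      refine W.internal.submodule_iSupIndep.mem_span_inter ?_ hL.2.1 ?_
      · rintro y (hy | hy)
        · exact Set.mem_iUnion.mpr ⟨_, hhom y hy⟩
        · exact W.C1generators_subset_iUnion_grading hy
      · rw [W.span_union_C1generators_eq_top hspan]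
        trivial
    suffices hle : Submodule.span ℂ ((X ∪ W.C1generators) ∩ W.grading p.deg) ≤
        (Submodule.span ℂ (W.orderedMonomials X wt)).comap Φ from hle hp
    rw [Submodule.span_le]
    rintro y ⟨hy | hy, hys⟩
    · have := ihG (F ++ [⟨y, p.deg, p.idx⟩])
        (by simpa [or_imp, forall_and, hy, not_le.mp hs] using hF) (by simpa [hL] using hys)
        (by simp only [cost_append, cost_cons, cost_nil]; omega)
      rwa [List.append_assoc, List.singleton_append, W.monomial_append_cons] at this
    · exact W.modeProd_mode_C1generator_mem ih hL.1 hL.2.2 hy hys p.idx (by omega)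

theorem monomial_mem_span (hhom : ∀ u ∈ X, u ∈ W.grading (wt u))
    (hspan : Submodule.span ℂ ((C1space V W).mkQ '' X) = ⊤) {L : List (ModeFactor V)}
    (hL : W.Graded L) : W.monomial L ∈ Submodule.span ℂ (W.orderedMonomials X wt) := by
  induction hn : cost L using Nat.strong_induction_on generalizing L with
  | _ n ih =>
  exact W.monomial_append_mem hhom hspan (fun L' hL' hlt => ih _ hlt hL' rfl) L []
    (by simp) hL hn.le

theorem span_orderedMonomials_eq_top (hhom : ∀ u ∈ X, u ∈ W.grading (wt u))
    (hspan : Submodule.span ℂ ((C1space V W).mkQ '' X) = ⊤) :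
    Submodule.span ℂ (W.orderedMonomials X wt) = ⊤ := by
  rw [eq_top_iff, ← W.internal.submodule_iSup_eq_top, iSup_le_iff]
  intro j x hx
  simpa [W.creation_neg_one] using
    W.monomial_mem_span hhom hspan (L := [⟨x, j, -1⟩]) (by simpa using hx)

end VOA

end KarelLi

/-- Karel–Li: representatives of a spanning set of `V/C_1(V)` span `V` via
elements `u¹_{n₁} ⋯ uʳ_{nᵣ} 1` with `wt(u¹_{n₁}) ≥ ⋯ ≥ wt(uʳ_{nᵣ}) > 0`. -/
theorem stmt7 (W : VOA V) (X : Set V) (wt : V → ℤ)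
    (hhom : ∀ u ∈ X, u ∈ W.grading (wt u))
    (hspan : Submodule.span ℂ ((C1space V W).mkQ '' X) = ⊤) :
    Submodule.span ℂ { x | ∃ L : List (V × ℤ),
      (∀ p ∈ L, p.1 ∈ X) ∧
      L.Chain' (fun p q => wt q.1 - q.2 - 1 ≤ wt p.1 - p.2 - 1) ∧
      (∀ p ∈ L, 0 < wt p.1 - p.2 - 1) ∧
      x = applyModes V W.toVertexAlg L W.vac } = (⊤ : Submodule ℂ V) :=
  W.span_orderedMonomials_eq_top hhom hspan

end VOAPaper
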